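/- arXiv:2102.12688 — 2 statements merged into one kernel-verified Lean document; each statement's English description precedes it below -/
import Mathlib

section
/- For a real number $q$ with $q > 0$ and $q \ne 1$, for all nonnegative integers $n$ and $k$ and every positive integer $r$, $\binom{k+r-1}{k}_q H_n^{(k+r)}(q) = \binom{n+k}{n}_q H_{n+k}^{(r)}(q) - \binom{n+k+r-1}{n}_q H_k^{(r)}(q)$. -/
/-- The `q`-integer `[n]_q = (1 - q^n)/(1 - q)`. -/
noncomputable def qint (q : ℝ) (n : ℕ) : ℝ := (1 - q ^ n) / (1 - q)

/-- The `q`-factorial `[n]_q! = [n]_q [n-1]_q ⋯ [1]_q`, with `[0]_q! = 1`. -/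
noncomputable def qfact (q : ℝ) : ℕ → ℝ
  | 0 => 1
  | n + 1 => qint q (n + 1) * qfact q n

/-- The `q`-binomial coefficient `C(n,k)_q = [n]_q!/([k]_q! [n-k]_q!)`, equal to `0` for `k > n`. -/
noncomputable def qbinom (q : ℝ) (n k : ℕ) : ℝ :=
  if k ≤ n then qfact q n / (qfact q k * qfact q (n - k)) else 0

/-- The `q`-hyperharmonic numbers: `H_n^{(0)}(q) = 1/(q [n]_q)` and
`H_n^{(r)}(q) = ∑_{j=1}^n q^j H_j^{(r-1)}(q)` for `r ≥ 1` (so `H_0^{(r)}(q) = 0`). -/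
noncomputable def qhyp (q : ℝ) : ℕ → ℕ → ℝ
  | 0, n => 1 / (q * qint q n)
  | r + 1, n => ∑ j ∈ Finset.Icc 1 n, q ^ j * qhyp q r j

/-! Every `q`-hyperharmonic number reduces to `q`-harmonic numbers through the closed form
`H_n^{(s+1)}(q) = C(n+s, n)_q (H_{n+s}(q) - H_s(q))`, proved by induction on `s` and `n` from the
`q`-Pascal rule and the absorption identity `[m+1]_q C(k+m+1, k)_q = [k+m+1]_q C(k+m, k)_q`.
Substituting it on both sides, the claim with `r = s + 1` becomes the trinomial revision
`C(n+k, n)_q C(n+k+s, n+k)_q = C(k+s, k)_q C(n+k+s, n)_q`. -/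

theorem qint_add (q : ℝ) (a b : ℕ) : qint q (a + b) = qint q a + q ^ a * qint q b := by
  simp only [qint]
  ring

theorem qfact_succ (q : ℝ) (n : ℕ) : qfact q (n + 1) = qint q (n + 1) * qfact q n := rfl

theorem qint_ne_zero {q : ℝ} (hq : 0 < q) (hq1 : q ≠ 1) {n : ℕ} (hn : n ≠ 0) :
    qint q n ≠ 0 := by
  have hpow : q ^ n ≠ 1 := by
    rcases hq1.lt_or_gt with h | h
    · exact (pow_lt_one₀ hq.le h hn).ne
    · exact (one_lt_pow₀ h hn).ne'
  exact div_ne_zero (sub_ne_zero.mpr hpow.symm) (sub_ne_zero.mpr hq1.symm)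

theorem qfact_ne_zero {q : ℝ} (hq : 0 < q) (hq1 : q ≠ 1) : ∀ n, qfact q n ≠ 0
  | 0 => one_ne_zero
  | n + 1 => mul_ne_zero (qint_ne_zero hq hq1 n.succ_ne_zero) (qfact_ne_zero hq hq1 n)

theorem qbinom_eq_qfact_div_of_add_eq (q : ℝ) {k m n : ℕ} (h : k + m = n) :
    qbinom q n k = qfact q n / (qfact q k * qfact q m) := by
  subst h
  rw [qbinom, if_pos (Nat.le_add_right k m), Nat.add_sub_cancel_left]

theorem qbinom_self {q : ℝ} (hq : 0 < q) (hq1 : q ≠ 1) (n : ℕ) : qbinom q n n = 1 := by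
  rw [qbinom_eq_qfact_div_of_add_eq q (Nat.add_zero n), qfact, mul_one,
    div_self (qfact_ne_zero hq hq1 n)]

theorem qbinom_succ_succ {q : ℝ} (hq : 0 < q) (hq1 : q ≠ 1) (k m : ℕ) :
    qbinom q (k + m + 1 + 1) (k + 1) =
      qbinom q (k + m + 1) k + q ^ (k + 1) * qbinom q (k + m + 1) (k + 1) := by
  rw [qbinom_eq_qfact_div_of_add_eq q (show k + 1 + (m + 1) = k + m + 1 + 1 by ring),
    qbinom_eq_qfact_div_of_add_eq q (show k + (m + 1) = k + m + 1 by ring),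
    qbinom_eq_qfact_div_of_add_eq q (show k + 1 + m = k + m + 1 by ring),
    qfact_succ q (k + m + 1), qfact_succ q k, qfact_succ q m,
    show k + m + 1 + 1 = k + 1 + (m + 1) by ring, qint_add q (k + 1) (m + 1)]
  have := qfact_ne_zero hq hq1
  have := qint_ne_zero hq hq1 (Nat.succ_ne_zero k)
  have := qint_ne_zero hq hq1 (Nat.succ_ne_zero m)
  field_simp

theorem qint_mul_qbinom_succ {q : ℝ} (hq : 0 < q) (hq1 : q ≠ 1) (k m : ℕ) :
    qint q (m + 1) * qbinom q (k + m + 1) k = qint q (k + m + 1) * qbinom q (k + m) k := by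
  rw [qbinom_eq_qfact_div_of_add_eq q (Nat.add_assoc k m 1).symm,
    qbinom_eq_qfact_div_of_add_eq q rfl, qfact_succ q (k + m), qfact_succ q m]
  have := qfact_ne_zero hq hq1
  have := qint_ne_zero hq hq1 (Nat.succ_ne_zero m)
  field_simp

theorem qbinom_mul_qbinom {q : ℝ} (hq : 0 < q) (hq1 : q ≠ 1) (n k s : ℕ) :
    qbinom q (n + k) n * qbinom q (n + k + s) (n + k) =
      qbinom q (k + s) k * qbinom q (n + k + s) n := by
  rw [qbinom_eq_qfact_div_of_add_eq q rfl, qbinom_eq_qfact_div_of_add_eq q rfl,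
    qbinom_eq_qfact_div_of_add_eq q rfl, qbinom_eq_qfact_div_of_add_eq q (Nat.add_assoc n k s).symm]
  field_simp [qfact_ne_zero hq hq1]

theorem qhyp_succ_zero (q : ℝ) (r : ℕ) : qhyp q (r + 1) 0 = 0 := by
  simp [qhyp]

theorem qhyp_succ_succ (q : ℝ) (r n : ℕ) :
    qhyp q (r + 1) (n + 1) = qhyp q (r + 1) n + q ^ (n + 1) * qhyp q r (n + 1) := by
  simp only [qhyp]
  rw [Finset.sum_Icc_succ_top (Nat.le_add_left 1 n)]

theorem qhyp_succ_eq_qbinom_mul {q : ℝ} (hq : 0 < q) (hq1 : q ≠ 1) (s n : ℕ) :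
    qhyp q (s + 1) n = qbinom q (n + s) n * (qhyp q 1 (n + s) - qhyp q 1 s) := by
  induction s generalizing n with
  | zero => rw [qhyp_succ_zero, sub_zero, add_zero, qbinom_self hq hq1, one_mul]
  | succ s ihs =>
    induction n with
    | zero => rw [qhyp_succ_zero, Nat.zero_add, sub_self, mul_zero]
    | succ n ihn =>
      have pascal := qbinom_succ_succ hq hq1 n s
      have absorb : qbinom q (n + s + 1 + 1) (n + 1) *
          (q ^ (n + s + 1 + 1) * qhyp q 0 (n + s + 1 + 1)) =
          q ^ (n + 1) * qbinom q (n + s + 1) (n + 1) * (q ^ (s + 1) * qhyp q 0 (s + 1)) := by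
        have h := qint_mul_qbinom_succ hq hq1 (n + 1) s
        rw [Nat.add_right_comm n 1 s] at h
        have := qint_ne_zero hq hq1 (Nat.succ_ne_zero s)
        have := qint_ne_zero hq hq1 (Nat.succ_ne_zero (n + s + 1))
        simp only [qhyp]
        field_simp
        linear_combination q ^ (n + s + 1 + 1) * h
      rw [qhyp_succ_succ, ihn, ihs, qhyp_succ_succ q 0 s, ← Nat.add_assoc,
        Nat.add_right_comm n 1 s, show n + 1 + (s + 1) = n + s + 1 + 1 by ring,
        qhyp_succ_succ q 0 (n + s + 1), Nat.zero_add]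
      -- the `H_{n+s+1}` terms match by `pascal`, the remaining increments by `absorb`
      linear_combination
        (qhyp q 1 s + q ^ (s + 1) * qhyp q 0 (s + 1) - qhyp q 1 (n + s + 1)) * pascal - absorb

/-- For `q > 0`, `q ≠ 1`, all `n, k ≥ 0` and every `r ≥ 1`,
`C(k+r-1, k)_q H_n^{(k+r)}(q) = C(n+k, n)_q H_{n+k}^{(r)}(q) - C(n+k+r-1, n)_q H_k^{(r)}(q)`. -/
theorem qhyp_order_shift (q : ℝ) (hq : 0 < q) (hq1 : q ≠ 1) (n k r : ℕ) (hr : 1 ≤ r) :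
    qbinom q (k + r - 1) k * qhyp q (k + r) n =
      qbinom q (n + k) n * qhyp q r (n + k) -
        qbinom q (n + k + r - 1) n * qhyp q r k := by
  obtain ⟨s, rfl⟩ := Nat.exists_eq_add_of_le' hr
  rw [Nat.add_succ_sub_one, Nat.add_succ_sub_one, ← Nat.add_assoc,
    qhyp_succ_eq_qbinom_mul hq hq1 (k + s), qhyp_succ_eq_qbinom_mul hq hq1 s,
    qhyp_succ_eq_qbinom_mul hq hq1 s, ← Nat.add_assoc]
  linear_combination (qhyp q 1 s - qhyp q 1 (n + k + s)) * qbinom_mul_qbinom hq hq1 n k s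
end

section
/- Define rational numbers $A_2(p,r,n)$ and $B_2(p,r,n)$ for integers $p \ge 0$, $r \ge 1$, $n \ge 0$ by $A_2(0,r,n) = n/r$, $B_2(0,r,n) = \frac{1}{r}\binom{n+r-1}{r}$, and for $p \ge 1$: $A_2(p,r,n) = A_2(0,r,n)\bigl(1 + \sum_{j=0}^{p-1} \binom{p}{j} A_2(j, r+1, n-1)\bigr)$ and $B_2(p,r,n) = B_2(0,r,n)\bigl(1 + \sum_{j=0}^{p-1} \binom{p}{j} A_2(j, r+1, n-1)\bigr) + \sum_{j=0}^{p-1} \binom{p}{j} B_2(j, r+1, n-1)$. Then for all positive integers $n$, $p$, $r$, $\sum_{\ell=1}^{n} \ell^{p} H_{n-\ell}^{(r)} = A_2(p,r,n) H_n^{(r)} - B_2(p,r,n)$. -/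
/-- The harmonic number `H_n = ∑_{j=1}^n 1/j`. -/
noncomputable def harm (n : ℕ) : ℝ := ∑ j ∈ Finset.Icc 1 n, (1 : ℝ) / j

/-- The hyperharmonic numbers: `H_n^{(1)} = H_n` and
`H_n^{(r)} = ∑_{ℓ=1}^n H_ℓ^{(r-1)}` for `r ≥ 2` (so `H_0^{(r)} = 0`). -/
noncomputable def hyp : ℕ → ℕ → ℝ
  | 0, _ => 0
  | 1, n => harm n
  | r + 2, n => ∑ ℓ ∈ Finset.Icc 1 n, hyp (r + 1) ℓ

/-- The rising factorial `(x)^{(m)} = x (x+1) ⋯ (x+m-1)`, with `(x)^{(0)} = 1`. -/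
noncomputable def rise (x : ℝ) (m : ℕ) : ℝ := ∏ i ∈ Finset.range m, (x + i)

/-- `A_2(p,r,n)`, defined by `A_2(0,r,n) = n/r` and, for `p ≥ 1`,
`A_2(p,r,n) = A_2(0,r,n) (1 + ∑_{j=0}^{p-1} C(p,j) A_2(j, r+1, n-1))`. -/
noncomputable def A2 : ℕ → ℕ → ℕ → ℝ
  | 0, r, n => (n : ℝ) / r
  | p + 1, r, n => ((n : ℝ) / r) *
      (1 + ∑ j ∈ (Finset.range (p + 1)).attach,
        ((p + 1).choose j.1 : ℝ) * A2 j.1 (r + 1) (n - 1))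
  termination_by p _ _ => p
  decreasing_by exact Finset.mem_range.mp j.2

/-- `B_2(p,r,n)`, defined by `B_2(0,r,n) = C(n+r-1, r)/r` and, for `p ≥ 1`,
`B_2(p,r,n) = B_2(0,r,n) (1 + ∑_{j=0}^{p-1} C(p,j) A_2(j, r+1, n-1))
   + ∑_{j=0}^{p-1} C(p,j) B_2(j, r+1, n-1)`. -/
noncomputable def B2 : ℕ → ℕ → ℕ → ℝ
  | 0, r, n => ((n + r - 1).choose r : ℝ) / r
  | p + 1, r, n => (((n + r - 1).choose r : ℝ) / r) *
      (1 + ∑ j ∈ (Finset.range (p + 1)).attach,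
        ((p + 1).choose j.1 : ℝ) * A2 j.1 (r + 1) (n - 1)) +
      ∑ j ∈ (Finset.range (p + 1)).attach,
        ((p + 1).choose j.1 : ℝ) * B2 j.1 (r + 1) (n - 1)
  termination_by p _ _ => p
  decreasing_by exact Finset.mem_range.mp j.2


/-!
Induction on `p`. For `p = 0` the sum is `∑_{k<n} H_k^{(r)}`, which telescopes via
`(n+1) H_{n+1}^{(r)} - (n+r) H_n^{(r)} = C(n+r-1, r-1)` (itself proved by induction on `r`
and `n`). For `p ≥ 1` write `H_k^{(r)} = H_k^{(r+1)} - H_{k-1}^{(r+1)}` and sum by parts: the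
weight differences `(ℓ+1)^p - ℓ^p` expand binomially into lower powers, so the sum for
`(p, r, n)` becomes `H_{n-1}^{(r+1)}` plus a binomial combination of the sums for
`(j, r+1, n-1)`, `j < p`, which is exactly the recursion defining `A2` and `B2`.
-/

open Finset

lemma harm_succ (n : ℕ) : harm (n + 1) = harm n + 1 / (n + 1) := by
  rw [harm, harm, sum_Icc_succ_top (by omega)]
  push_cast
  ring

@[simp]
lemma hyp_zero_right (r : ℕ) : hyp r 0 = 0 := by
  rcases r with _ | _ | r <;> simp [hyp, harm]

lemma hyp_succ_succ (r n : ℕ) : hyp (r + 2) (n + 1) = hyp (r + 2) n + hyp (r + 1) (n + 1) := by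
  rw [hyp, hyp, sum_Icc_succ_top (by omega)]

lemma hyp_one_right (r : ℕ) : hyp (r + 1) 1 = 1 := by
  induction r with
  | zero => simp [hyp, harm]
  | succ r ih => rw [hyp_succ_succ, hyp_zero_right, zero_add, ih]

lemma hyp_eq_sub_pred (r k : ℕ) : hyp (r + 1) k = hyp (r + 2) k - hyp (r + 2) (k - 1) := by
  cases k with
  | zero => simp
  | succ k => rw [Nat.add_sub_cancel, hyp_succ_succ]; ring

lemma hyp_succ_succ_eq_sum_range (r n : ℕ) :
    hyp (r + 2) n = ∑ k ∈ range (n + 1), hyp (r + 1) k := by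
  induction n with
  | zero => simp
  | succ n ih => rw [hyp_succ_succ, ih, sum_range_succ _ (n + 1)]

lemma succ_mul_hyp_succ_sub (r n : ℕ) :
    ((n : ℝ) + 1) * hyp (r + 1) (n + 1) - ((n : ℝ) + r + 1) * hyp (r + 1) n
      = ((n + r).choose r : ℝ) := by
  induction r generalizing n with
  | zero =>
    simp only [hyp, harm_succ, Nat.add_zero, Nat.choose_zero_right, Nat.cast_one]
    field_simp
    ring
  | succ r ih =>
    induction n with
    | zero => simp [hyp_one_right]
    | succ n ihn =>
      have hpascal := Nat.choose_succ_succ (n + 1 + r) r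
      rw [hyp_succ_succ r (n + 1), hyp_succ_succ r n]
      rw [hyp_succ_succ r n, show n + (r + 1) = n + 1 + r by ring] at ihn
      rw [show n + 1 + (r + 1) = n + 1 + r + 1 by ring, hpascal]
      have ih' := ih (n + 1)
      push_cast at ihn ih' ⊢
      linear_combination ihn + ih'

lemma sum_range_hyp (r n : ℕ) :
    ∑ k ∈ range n, hyp (r + 1) k
      = (n : ℝ) / (r + 1) * hyp (r + 1) n - ((n + r).choose (r + 1) : ℝ) / (r + 1) := by
  induction n with
  | zero => simp
  | succ n ih =>
    have hpascal := Nat.choose_succ_succ (n + r) r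
    rw [sum_range_succ, ih, show n + 1 + r = n + r + 1 by ring, hpascal]
    have := succ_mul_hyp_succ_sub r n
    push_cast at this ⊢
    field_simp
    linear_combination -this

lemma hyp_succ_succ_eq (r m : ℕ) :
    hyp (r + 2) m = ((m : ℝ) + 1) / (r + 1) * hyp (r + 1) (m + 1)
      - ((m + r + 1).choose (r + 1) : ℝ) / (r + 1) := by
  rw [hyp_succ_succ_eq_sum_range, sum_range_hyp, show m + 1 + r = m + r + 1 by ring]
  push_cast
  ring

lemma add_one_pow_succ_sub_pow {R : Type*} [CommRing R] (x : R) (p : ℕ) :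
    (x + 1) ^ (p + 1) - x ^ (p + 1) = ∑ j ∈ range (p + 1), ((p + 1).choose j : R) * x ^ j := by
  rw [add_pow, sum_range_succ]
  simp only [one_pow, mul_one, Nat.choose_self, Nat.cast_one, add_sub_cancel_right]
  exact sum_congr rfl fun j _ => mul_comm _ _

lemma sum_range_mul_sub_pred {R : Type*} [CommRing R] (w G : ℕ → R) (hG : G 0 = 0) (m : ℕ) :
    ∑ i ∈ range (m + 1), w i * (G (m - i) - G (m - i - 1))
      = w 0 * G m + ∑ i ∈ range m, (w (i + 1) - w i) * G (m - 1 - i) := by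
  simp only [mul_sub, sub_mul, sum_sub_distrib]
  rw [sum_range_succ', sum_range_succ (fun i => w i * G (m - i - 1)), Nat.sub_self, Nat.zero_sub,
    hG, mul_zero, add_zero, Nat.sub_zero]
  have hshift₁ : ∀ i ∈ range m, w (i + 1) * G (m - (i + 1)) = w (i + 1) * G (m - 1 - i) :=
    fun i _ => by rw [Nat.sub_add_eq, Nat.sub_right_comm]
  have hshift₂ : ∀ i ∈ range m, w i * G (m - i - 1) = w i * G (m - 1 - i) :=
    fun i _ => by rw [Nat.sub_right_comm]
  rw [sum_congr rfl hshift₁, sum_congr rfl hshift₂]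
  ring

lemma A2_succ (p r n : ℕ) : A2 (p + 1) r n = (n : ℝ) / r *
    (1 + ∑ j ∈ range (p + 1), ((p + 1).choose j : ℝ) * A2 j (r + 1) (n - 1)) := by
  rw [A2, sum_attach _ fun j => ((p + 1).choose j : ℝ) * A2 j (r + 1) (n - 1)]

lemma B2_succ (p r n : ℕ) : B2 (p + 1) r n = ((n + r - 1).choose r : ℝ) / r *
    (1 + ∑ j ∈ range (p + 1), ((p + 1).choose j : ℝ) * A2 j (r + 1) (n - 1)) +
    ∑ j ∈ range (p + 1), ((p + 1).choose j : ℝ) * B2 j (r + 1) (n - 1) := by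
  rw [B2, sum_attach _ fun j => ((p + 1).choose j : ℝ) * A2 j (r + 1) (n - 1),
    sum_attach _ fun j => ((p + 1).choose j : ℝ) * B2 j (r + 1) (n - 1)]

lemma B2_zero_right (p r : ℕ) : B2 p r 0 = 0 := by
  have hchoose (r : ℕ) : ((0 + r - 1).choose r : ℝ) / r = 0 := by
    rcases r with _ | r <;> simp
  induction p using Nat.strong_induction_on generalizing r with
  | _ p ih =>
    cases p with
    | zero => rw [B2, hchoose]
    | succ p =>
      rw [B2_succ, hchoose, zero_mul, zero_add]
      exact sum_eq_zero fun j hj => by rw [Nat.zero_sub, ih j (mem_range.mp hj), mul_zero]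

lemma sum_range_pow_succ_mul_hyp (p r m : ℕ) :
    ∑ i ∈ range (m + 1), ((i : ℝ) + 1) ^ (p + 1) * hyp (r + 1) (m - i)
      = hyp (r + 2) m + ∑ j ∈ range (p + 1), ((p + 1).choose j : ℝ) *
          ∑ i ∈ range m, ((i : ℝ) + 1) ^ j * hyp (r + 2) (m - 1 - i) := by
  simp only [hyp_eq_sub_pred r]
  rw [sum_range_mul_sub_pred (fun i => ((i : ℝ) + 1) ^ (p + 1)) _ (hyp_zero_right _)]
  simp only [mul_sum, sum_comm (s := range (p + 1))]
  push_cast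
  simp only [add_one_pow_succ_sub_pow, sum_mul, mul_assoc]
  ring

lemma sum_range_pow_mul_hyp (p r n : ℕ) :
    ∑ i ∈ range n, ((i : ℝ) + 1) ^ p * hyp (r + 1) (n - 1 - i)
      = A2 p (r + 1) n * hyp (r + 1) n - B2 p (r + 1) n := by
  induction p using Nat.strong_induction_on generalizing r n with
  | _ p ih =>
    match p, n with
    | 0, n =>
      simp only [pow_zero, one_mul, A2, B2]
      rw [sum_range_reflect (hyp (r + 1)), sum_range_hyp, show n + (r + 1) - 1 = n + r by omega]
      push_cast
      ring
    | p + 1, 0 => simp [B2_zero_right]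
    | p + 1, m + 1 =>
      rw [Nat.add_sub_cancel, sum_range_pow_succ_mul_hyp]
      rw [sum_congr rfl fun j hj => by rw [ih j (mem_range.mp hj) (r + 1) m]]
      rw [A2_succ, B2_succ, Nat.add_sub_cancel, hyp_succ_succ_eq,
        show m + 1 + (r + 1) - 1 = m + r + 1 by omega]
      simp only [mul_sub, sum_sub_distrib, ← mul_assoc, ← sum_mul]
      push_cast
      ring

theorem sum_backward_pow_mul_hyp_general (n p r : ℕ) (hr : 1 ≤ r) :
    ∑ ℓ ∈ Finset.Icc 1 n, (ℓ : ℝ) ^ p * hyp r (n - ℓ) =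
      A2 p r n * hyp r n - B2 p r n := by
  obtain ⟨r, rfl⟩ := Nat.exists_eq_add_of_le' hr
  rw [← sum_range_pow_mul_hyp, range_eq_Ico, ← Ico_add_one_right_eq_Icc,
    ← sum_Ico_add' (fun ℓ : ℕ => (ℓ : ℝ) ^ p * hyp (r + 1) (n - ℓ)) 0 n 1]
  refine sum_congr rfl fun i _ => ?_
  rw [Nat.sub_add_eq, Nat.sub_right_comm, Nat.cast_succ]

/-- For positive integers `n, p, r`,
`∑_{ℓ=1}^n ℓ^p H_{n-ℓ}^{(r)} = A_2(p,r,n) H_n^{(r)} - B_2(p,r,n)`. -/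
theorem sum_backward_pow_mul_hyp (n p r : ℕ) (hn : 1 ≤ n) (hp : 1 ≤ p) (hr : 1 ≤ r) :
    ∑ ℓ ∈ Finset.Icc 1 n, (ℓ : ℝ) ^ p * hyp r (n - ℓ) =
      A2 p r n * hyp r n - B2 p r n :=
  sum_backward_pow_mul_hyp_general n p r hr
end
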